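/- For all integers n ≥ 1, ∑_{k=1}^n (4^{-k}/(2k-1))·C(2k,k)/(k+1)·H_{k+1} = 5/9 - (4^{-n}/(3(n+1)))·C(2n,n)·(H_{n+1} + 2/3). -/

import Mathlib

open Finset BigOperators

def H (n : ℕ) : ℚ := ∑ j ∈ Finset.range n, 1/(j+1)

lemma H_succ (n : ℕ) : H (n+1) = H n + 1/((n:ℚ)+1) := by
  simp [H, Finset.sum_range_succ]

lemma cb (n : ℕ) : ((Nat.choose (2*(n+1)) (n+1)) : ℚ) = 2*(2*(n:ℚ)+1) * (Nat.choose (2*n) n) / ((n:ℚ)+1) := by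
  have h2 : ((n+1) * Nat.centralBinom (n+1) : ℕ) = (2 * (2*n+1) * Nat.centralBinom n : ℕ) :=
    Nat.succ_mul_centralBinom_succ n
  unfold Nat.centralBinom at h2
  have h3 := congrArg (fun x : ℕ => (x:ℚ)) h2
  push_cast at h3
  have hm2 : ((n:ℚ)+1) ≠ 0 := by positivity
  field_simp
  linear_combination h3

theorem stmt16 (n : ℕ) (hn : 1 ≤ n) :
    ∑ k ∈ Finset.Icc 1 n, ((4:ℚ)^k)⁻¹ / (2*(k:ℚ)-1) * (Nat.choose (2*k) k) / ((k:ℚ)+1) * H (k+1) =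
      5/9 - ((4:ℚ)^n)⁻¹ / (3*((n:ℚ)+1)) * (Nat.choose (2*n) n) * (H (n+1) + 2/3) := by
  induction n with
  | zero => omega
  | succ m ih =>
    rcases Nat.lt_or_ge m 1 with h1 | hm
    · interval_cases m
      norm_num [H, Finset.sum_range_succ]
    · rw [Finset.sum_Icc_succ_top (by omega), ih hm]
      rw [cb m, H_succ (m+1)]
      push_cast
      have h4 : ((4:ℚ)^(m+1)) = 4 * 4^m := by ring
      rw [h4]
      set q : ℚ := (m:ℚ) with hq
      set x : ℚ := (4:ℚ)^m with hx
      set c : ℚ := ((Nat.choose (2*m) m : ℕ) : ℚ) with hc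
      set h : ℚ := H (m+1) with hh
      have hq1 : q+1 ≠ 0 := by positivity
      have hq2 : q+2 ≠ 0 := by positivity
      have hq3 : 2*q+1 ≠ 0 := by positivity
      have hq4 : 2*(q+1)-1 ≠ 0 := by intro h0; apply hq3; linarith
      have hxne : x ≠ 0 := by positivity
      have hq5 : q+1+1 ≠ 0 := by positivity
      rw [show 2*(q+1)-1 = 2*q+1 by ring]
      have hq7 : q*2+1 ≠ 0 := by positivity
      field_simp
      ring
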